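/- arXiv:1901.03614 — 5 statements merged into one kernel-verified Lean document; each statement's English description precedes it below -/
import Mathlib

section
/- Let h_m, h_e, g_m, g_e, σ, P_s, P_j be positive reals with h_m > h_e. Define the secure rate with jammer R_J = log₂(1 + P_s·h_m²/(σ² + P_j·g_m²)) − log₂(1 + P_s·h_e²/(σ² + P_j·g_e²)) and without jammer R_0 = log₂(1 + P_s·h_m²/σ²) − log₂(1 + P_s·h_e²/σ²). If g_m ≥ g_e, then for every P_j > 0, R_J ≤ R_0. -/
theorem jammer_no_improvement_when_gm_ge
    (hm he gm ge σ Ps Pj : ℝ)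
    (hhm : 0 < hm) (hhe : 0 < he) (hgm : 0 < gm) (hge : 0 < ge)
    (hσ : 0 < σ) (hPs : 0 < Ps) (hPj : 0 < Pj)
    (hmain : hm > he) (hg : gm ≥ ge) :
    Real.logb 2 (1 + Ps * hm ^ 2 / (σ ^ 2 + Pj * gm ^ 2)) -
      Real.logb 2 (1 + Ps * he ^ 2 / (σ ^ 2 + Pj * ge ^ 2)) ≤
    Real.logb 2 (1 + Ps * hm ^ 2 / σ ^ 2) -
      Real.logb 2 (1 + Ps * he ^ 2 / σ ^ 2) := by
  have hs : (0:ℝ) < σ ^ 2 := by positivity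
  have hDm : (0:ℝ) < σ ^ 2 + Pj * gm ^ 2 := by positivity
  have hDe : (0:ℝ) < σ ^ 2 + Pj * ge ^ 2 := by positivity
  have ha : (0:ℝ) < Ps * hm ^ 2 := by positivity
  have hb : (0:ℝ) < Ps * he ^ 2 := by positivity
  have hx1 : (0:ℝ) < 1 + Ps * hm ^ 2 / (σ ^ 2 + Pj * gm ^ 2) := by positivity
  have hx2 : (0:ℝ) < 1 + Ps * he ^ 2 / (σ ^ 2 + Pj * ge ^ 2) := by positivity
  have hx3 : (0:ℝ) < 1 + Ps * hm ^ 2 / σ ^ 2 := by positivity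
  have hx4 : (0:ℝ) < 1 + Ps * he ^ 2 / σ ^ 2 := by positivity
  rw [sub_le_sub_iff]
  rw [← Real.logb_mul (ne_of_gt hx1) (ne_of_gt hx4),
      ← Real.logb_mul (ne_of_gt hx3) (ne_of_gt hx2)]
  rw [Real.logb_le_logb (by norm_num) (by positivity) (by positivity)]
  have e1 : 1 + Ps * hm ^ 2 / (σ ^ 2 + Pj * gm ^ 2)
      = (σ ^ 2 + Pj * gm ^ 2 + Ps * hm ^ 2) / (σ ^ 2 + Pj * gm ^ 2) := by
    field_simp
  have e2 : 1 + Ps * he ^ 2 / (σ ^ 2 + Pj * ge ^ 2)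
      = (σ ^ 2 + Pj * ge ^ 2 + Ps * he ^ 2) / (σ ^ 2 + Pj * ge ^ 2) := by
    field_simp
  have e3 : 1 + Ps * hm ^ 2 / σ ^ 2 = (σ ^ 2 + Ps * hm ^ 2) / σ ^ 2 := by field_simp
  have e4 : 1 + Ps * he ^ 2 / σ ^ 2 = (σ ^ 2 + Ps * he ^ 2) / σ ^ 2 := by field_simp
  rw [e1, e2, e3, e4, div_mul_div_comm, div_mul_div_comm]
  have hab : Ps * he ^ 2 ≤ Ps * hm ^ 2 := by
    have : he ^ 2 ≤ hm ^ 2 := by nlinarith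
    nlinarith
  have hDeDm : σ ^ 2 + Pj * ge ^ 2 ≤ σ ^ 2 + Pj * gm ^ 2 := by
    have : ge ^ 2 ≤ gm ^ 2 := by nlinarith
    nlinarith
  rw [div_le_div_iff₀ (by positivity) (by positivity)]
  have h1 : 0 ≤ (Pj * gm ^ 2) * (Ps * hm ^ 2 - Ps * he ^ 2) :=
    mul_nonneg (by positivity) (sub_nonneg.2 hab)
  have h2 : 0 ≤ (Ps * he ^ 2) * ((σ ^ 2 + Pj * gm ^ 2) - (σ ^ 2 + Pj * ge ^ 2)) :=
    mul_nonneg hb.le (sub_nonneg.2 hDeDm)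
  have h3 : 0 ≤ (Pj * gm ^ 2) * (Ps * hm ^ 2 - Ps * he ^ 2)
      * (σ ^ 2 * (σ ^ 2 + Pj * ge ^ 2)) :=
    mul_nonneg h1 (by positivity)
  have h4 : 0 ≤ (Ps * he ^ 2) * ((σ ^ 2 + Pj * gm ^ 2) - (σ ^ 2 + Pj * ge ^ 2))
      * (σ ^ 2 * (σ ^ 2 + Ps * hm ^ 2)) :=
    mul_nonneg h2 (by positivity)
  linarith [h3, h4]
end

section
/- Let h_m, h_e, g_m, g_e, σ, P_s, P_j be positive reals with h_m > h_e and g_e > g_m. Then log₂((1 + P_s·h_m²/(σ² + P_j·g_m²))/(1 + P_s·h_e²/(σ² + P_j·g_e²))) > log₂((1 + P_s·h_m²/σ²)/(1 + P_s·h_e²/σ²)) holds if and only if P_j·g_m²·g_e²·(h_m² − h_e²) < P_s·(g_e² − g_m²)·h_m²·h_e² + σ²·(g_e²·h_e² − g_m²·h_m²). -/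
theorem rate_improvement_iff
    (hm he gm ge σ Ps Pj : ℝ)
    (hhm : 0 < hm) (hhe : 0 < he) (hgm : 0 < gm) (hge : 0 < ge)
    (hσ : 0 < σ) (hPs : 0 < Ps) (hPj : 0 < Pj)
    (hmain : hm > he) (hg : ge > gm) :
    Real.logb 2 ((1 + Ps * hm ^ 2 / (σ ^ 2 + Pj * gm ^ 2)) /
        (1 + Ps * he ^ 2 / (σ ^ 2 + Pj * ge ^ 2))) >
      Real.logb 2 ((1 + Ps * hm ^ 2 / σ ^ 2) / (1 + Ps * he ^ 2 / σ ^ 2)) ↔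
    Pj * gm ^ 2 * ge ^ 2 * (hm ^ 2 - he ^ 2) <
      Ps * (ge ^ 2 - gm ^ 2) * hm ^ 2 * he ^ 2 +
        σ ^ 2 * (ge ^ 2 * he ^ 2 - gm ^ 2 * hm ^ 2) := by
  have hσ2 : (0:ℝ) < σ ^ 2 := by positivity
  have hdm : (0:ℝ) < σ ^ 2 + Pj * gm ^ 2 := by positivity
  have hde : (0:ℝ) < σ ^ 2 + Pj * ge ^ 2 := by positivity
  have hx : (0:ℝ) < (1 + Ps * hm ^ 2 / σ ^ 2) / (1 + Ps * he ^ 2 / σ ^ 2) := by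
    positivity
  have hy : (0:ℝ) < (1 + Ps * hm ^ 2 / (σ ^ 2 + Pj * gm ^ 2)) /
      (1 + Ps * he ^ 2 / (σ ^ 2 + Pj * ge ^ 2)) := by positivity
  have e1 : 1 + Ps * hm ^ 2 / σ ^ 2 = (σ ^ 2 + Ps * hm ^ 2) / σ ^ 2 := by
    field_simp
  have e2 : 1 + Ps * he ^ 2 / σ ^ 2 = (σ ^ 2 + Ps * he ^ 2) / σ ^ 2 := by
    field_simp
  have e3 : 1 + Ps * hm ^ 2 / (σ ^ 2 + Pj * gm ^ 2) =
      ((σ ^ 2 + Pj * gm ^ 2) + Ps * hm ^ 2) / (σ ^ 2 + Pj * gm ^ 2) := by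
    field_simp
  have e4 : 1 + Ps * he ^ 2 / (σ ^ 2 + Pj * ge ^ 2) =
      ((σ ^ 2 + Pj * ge ^ 2) + Ps * he ^ 2) / (σ ^ 2 + Pj * ge ^ 2) := by
    field_simp
  rw [gt_iff_lt, Real.logb_lt_logb_iff (by norm_num) hx hy,
    div_lt_div_iff₀ (by positivity) (by positivity), e1, e2, e3, e4,
    div_mul_div_comm, div_mul_div_comm,
    div_lt_div_iff₀ (by positivity) (by positivity)]
  constructor <;> intro h <;>
    nlinarith [h, mul_pos (mul_pos hPs hPj) hσ2, mul_pos hσ2 hσ2,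
      mul_pos (mul_pos hPs hPj) (mul_pos hσ2 hσ2)]
end

section
/- Let h_m, h_e, g_m, g_e, σ, P_s be positive reals with h_m > h_e, g_e > g_m, and g_e·h_e ≥ g_m·h_m. Then for every jammer power P_j with 0 < P_j < (P_s·(g_e² − g_m²)h_m²h_e² + σ²(g_e²h_e² − g_m²h_m²))/(g_m²g_e²(h_m² − h_e²)), the secure rate with jammer strictly exceeds the secure rate without jammer: log₂(1 + P_s h_m²/(σ² + P_j g_m²)) − log₂(1 + P_s h_e²/(σ² + P_j g_e²)) > log₂(1 + P_s h_m²/σ²) − log₂(1 + P_s h_e²/σ²). -/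
theorem rate_improvement_below_threshold
    (hm he gm ge σ Ps : ℝ)
    (hhm : 0 < hm) (hhe : 0 < he) (hgm : 0 < gm) (hge : 0 < ge)
    (hσ : 0 < σ) (hPs : 0 < Ps)
    (hmain : hm > he) (hg : ge > gm) (hgh : ge * he ≥ gm * hm) :
    ∀ Pj : ℝ, 0 < Pj →
      Pj < (Ps * (ge ^ 2 - gm ^ 2) * hm ^ 2 * he ^ 2 +
              σ ^ 2 * (ge ^ 2 * he ^ 2 - gm ^ 2 * hm ^ 2)) /
            (gm ^ 2 * ge ^ 2 * (hm ^ 2 - he ^ 2)) →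
      Real.logb 2 (1 + Ps * hm ^ 2 / (σ ^ 2 + Pj * gm ^ 2)) -
          Real.logb 2 (1 + Ps * he ^ 2 / (σ ^ 2 + Pj * ge ^ 2)) >
        Real.logb 2 (1 + Ps * hm ^ 2 / σ ^ 2) -
          Real.logb 2 (1 + Ps * he ^ 2 / σ ^ 2) := by
  intro Pj hPj hth
  have hσ2 : (0:ℝ) < σ ^ 2 := by positivity
  have hDm : (0:ℝ) < σ ^ 2 + Pj * gm ^ 2 := by positivity
  have hDe : (0:ℝ) < σ ^ 2 + Pj * ge ^ 2 := by positivity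
  have hden : (0:ℝ) < gm ^ 2 * ge ^ 2 * (hm ^ 2 - he ^ 2) := by
    have : he ^ 2 < hm ^ 2 := by nlinarith
    nlinarith [sq_nonneg gm, sq_nonneg ge, mul_pos (mul_pos (pow_pos hgm 2) (pow_pos hge 2)) (sub_pos.mpr this)]
  have hkey : Pj * (gm ^ 2 * ge ^ 2 * (hm ^ 2 - he ^ 2)) <
      Ps * (ge ^ 2 - gm ^ 2) * hm ^ 2 * he ^ 2 +
        σ ^ 2 * (ge ^ 2 * he ^ 2 - gm ^ 2 * hm ^ 2) :=
    (lt_div_iff₀ hden).mp hth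
  -- positivity of all log arguments
  have a1 : (0:ℝ) < 1 + Ps * hm ^ 2 / (σ ^ 2 + Pj * gm ^ 2) := by positivity
  have a2 : (0:ℝ) < 1 + Ps * he ^ 2 / (σ ^ 2 + Pj * ge ^ 2) := by positivity
  have b1 : (0:ℝ) < 1 + Ps * hm ^ 2 / σ ^ 2 := by positivity
  have b2 : (0:ℝ) < 1 + Ps * he ^ 2 / σ ^ 2 := by positivity
  have hratio : (1 + Ps * hm ^ 2 / σ ^ 2) / (1 + Ps * he ^ 2 / σ ^ 2) <
      (1 + Ps * hm ^ 2 / (σ ^ 2 + Pj * gm ^ 2)) /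
        (1 + Ps * he ^ 2 / (σ ^ 2 + Pj * ge ^ 2)) := by
    rw [div_lt_div_iff₀ b2 a2]
    have e1 : 1 + Ps * hm ^ 2 / σ ^ 2 = (σ ^ 2 + Ps * hm ^ 2) / σ ^ 2 := by
      field_simp
    have e2 : 1 + Ps * he ^ 2 / σ ^ 2 = (σ ^ 2 + Ps * he ^ 2) / σ ^ 2 := by
      field_simp
    have e3 : 1 + Ps * hm ^ 2 / (σ ^ 2 + Pj * gm ^ 2) =
        (σ ^ 2 + Pj * gm ^ 2 + Ps * hm ^ 2) / (σ ^ 2 + Pj * gm ^ 2) := by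
      field_simp
    have e4 : 1 + Ps * he ^ 2 / (σ ^ 2 + Pj * ge ^ 2) =
        (σ ^ 2 + Pj * ge ^ 2 + Ps * he ^ 2) / (σ ^ 2 + Pj * ge ^ 2) := by
      field_simp
    rw [e1, e2, e3, e4, div_mul_div_comm, div_mul_div_comm,
      div_lt_div_iff₀ (by positivity) (by positivity)]
    ring_nf
    nlinarith [mul_pos hPj (mul_pos hPs hσ2), sq_nonneg σ, mul_pos hPj hσ2,
      mul_pos (mul_pos hPj hPj) hσ2]
  calc Real.logb 2 (1 + Ps * hm ^ 2 / σ ^ 2) - Real.logb 2 (1 + Ps * he ^ 2 / σ ^ 2)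
      = Real.logb 2 ((1 + Ps * hm ^ 2 / σ ^ 2) / (1 + Ps * he ^ 2 / σ ^ 2)) := by
        rw [Real.logb_div b1.ne' b2.ne']
    _ < Real.logb 2 ((1 + Ps * hm ^ 2 / (σ ^ 2 + Pj * gm ^ 2)) /
          (1 + Ps * he ^ 2 / (σ ^ 2 + Pj * ge ^ 2))) := by
        apply Real.logb_lt_logb one_lt_two (by positivity) hratio
    _ = _ := by rw [Real.logb_div a1.ne' a2.ne']
end

section
/- Let h_m, h_e, g_m, g_e, σ, P_s be positive reals with h_m > h_e, g_e > g_m, and σ²P_s h_m²h_e²(g_e² − g_m²) + σ⁴(g_e²h_e² − g_m²h_m²) > 0. Define R(P_j) = log₂(1 + P_s h_m²/(σ² + P_j g_m²)) − log₂(1 + P_s h_e²/(σ² + P_j g_e²)). Then there exists a unique P_j° > 0 such that R is strictly increasing on [0, P_j°] and strictly decreasing on [P_j°, ∞); in particular R attains its maximum over [0,∞) uniquely at P_j°. -/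
/-!
With `X = σ² + p g_m²` and `Y = σ² + p g_e²`, the derivative of the secure rate has the sign of
`Q(p) = P_s h_e² g_e² X (X + P_s h_m²) - P_s h_m² g_m² Y (Y + P_s h_e²)`, a quadratic in `p`.
Its leading coefficient `g_m² g_e² P_s (h_e² g_m² - h_m² g_e²)` is negative and `Q(0)` is `P_s`
times the positive quantity of the last hypothesis, so its roots have opposite signs:
`Q` is positive before its positive root `P_j°` and negative after it.
-/

open Real Set

/-- The secrecy rate of the paper with `a = P_s h_m²`, `b = P_s h_e²`, `s = σ²`, `g = g_m²`,
`k = g_e²` and jammer power `p`. -/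
noncomputable def secrecyRate (a b s g k p : ℝ) : ℝ :=
  logb 2 (1 + a / (s + p * g)) - logb 2 (1 + b / (s + p * k))

lemma exists_pos_root_sign_change {c₂ c₁ c₀ : ℝ} (h₂ : c₂ < 0) (h₀ : 0 < c₀) :
    ∃ r, 0 < r ∧ (∀ x ∈ Ioo 0 r, 0 < c₂ * x ^ 2 + c₁ * x + c₀) ∧
      ∀ x ∈ Ioi r, c₂ * x ^ 2 + c₁ * x + c₀ < 0 := by
  set d := √(c₁ ^ 2 - 4 * c₂ * c₀)
  have hd : d ^ 2 = c₁ ^ 2 - 4 * c₂ * c₀ := sq_sqrt (by nlinarith)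
  have hc₁d : |c₁| < d := abs_lt_of_sq_lt_sq (by nlinarith) (sqrt_nonneg _)
  obtain ⟨hd₁, hd₂⟩ := abs_lt.mp hc₁d
  set r₁ := (-c₁ + d) / (2 * c₂)
  set r₂ := (-c₁ - d) / (2 * c₂)
  have hr₁ : r₁ < 0 := div_neg_of_pos_of_neg (by linarith) (by linarith)
  have hr₂ : 0 < r₂ := div_pos_of_neg_of_neg (by linarith) (by linarith)
  have hfactor : ∀ x, c₂ * x ^ 2 + c₁ * x + c₀ = c₂ * (x - r₁) * (x - r₂) := by
    intro x
    have : c₂ ≠ 0 := h₂.ne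
    simp only [r₁, r₂]
    field_simp
    linear_combination hd
  refine ⟨r₂, hr₂, fun x hx => ?_, fun x hx => ?_⟩
  · rw [hfactor]
    exact mul_pos_of_neg_of_neg (mul_neg_of_neg_of_pos h₂ (by linarith [hx.1]))
      (by linarith [hx.2])
  · rw [hfactor]
    exact mul_neg_of_neg_of_pos (mul_neg_of_neg_of_pos h₂ (by linarith [mem_Ioi.mp hx]))
      (by linarith [mem_Ioi.mp hx])

lemma strictMonoOn_Icc_strictAntiOn_Ici_of_hasDerivAt {f f' : ℝ → ℝ} {a r : ℝ} (har : a ≤ r)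
    (hf : ∀ x ∈ Ici a, HasDerivAt f (f' x) x) (hpos : ∀ x ∈ Ioo a r, 0 < f' x)
    (hneg : ∀ x ∈ Ioi r, f' x < 0) :
    StrictMonoOn f (Icc a r) ∧ StrictAntiOn f (Ici r) := by
  have hcont : ContinuousOn f (Ici a) := fun x hx => (hf x hx).continuousAt.continuousWithinAt
  constructor
  · refine strictMonoOn_of_hasDerivWithinAt_pos (convex_Icc a r) (hcont.mono Icc_subset_Ici_self)
      (fun x hx => ?_) (fun x hx => hpos x (by rwa [interior_Icc] at hx))
    rw [interior_Icc] at hx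
    exact (hf x (mem_Ici.mpr hx.1.le)).hasDerivWithinAt
  · refine strictAntiOn_of_hasDerivWithinAt_neg (convex_Ici r)
      (hcont.mono (Ici_subset_Ici.mpr har)) (fun x hx => ?_)
      (fun x hx => hneg x (by rwa [interior_Ici] at hx))
    rw [interior_Ici] at hx
    exact (hf x (mem_Ici.mpr (har.trans (le_of_lt hx)))).hasDerivWithinAt

lemma lt_of_strictMonoOn_Icc_of_strictAntiOn_Ici {f : ℝ → ℝ} {a r x : ℝ}
    (hmono : StrictMonoOn f (Icc a r)) (hanti : StrictAntiOn f (Ici r)) (har : a ≤ r)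
    (hx : a ≤ x) (hxr : x ≠ r) : f x < f r := by
  rcases hxr.lt_or_gt with h | h
  · exact hmono ⟨hx, h.le⟩ ⟨har, le_rfl⟩ h
  · exact hanti self_mem_Ici (mem_Ici.mpr h.le) h

lemma hasDerivAt_logb_one_add_div {a s g p : ℝ} (hX : s + p * g ≠ 0) (hXa : s + p * g + a ≠ 0) :
    HasDerivAt (fun q => logb 2 (1 + a / (s + q * g)))
      (-(a * g) / ((s + p * g) * (s + p * g + a) * log 2)) p := by
  have hlin : HasDerivAt (fun q => s + q * g) g p := by
    simpa using ((hasDerivAt_id p).mul_const g).const_add s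
  have hone : 1 + a / (s + p * g) ≠ 0 := by
    rw [one_add_div hX]; exact div_ne_zero hXa hX
  have h := ((((hasDerivAt_const p a).div hlin hX).const_add 1).log hone).div_const (log 2)
  refine h.congr_deriv ?_
  have hlog : log 2 ≠ 0 := by positivity
  simp only [Pi.div_apply]
  field_simp
  ring

lemma hasDerivAt_secrecyRate {a b s g k p : ℝ} (hs : 0 < s) (ha : 0 ≤ a) (hb : 0 ≤ b)
    (hg : 0 ≤ g) (hk : 0 ≤ k) (hp : 0 ≤ p) :
    HasDerivAt (secrecyRate a b s g k)
      ((b * k * (s + p * g) * (s + p * g + a) - a * g * (s + p * k) * (s + p * k + b)) /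
        ((s + p * g) * (s + p * g + a) * (s + p * k) * (s + p * k + b) * log 2)) p := by
  have hX : 0 < s + p * g := by positivity
  have hY : 0 < s + p * k := by positivity
  refine ((hasDerivAt_logb_one_add_div (a := a) hX.ne' (by positivity)).sub
    (hasDerivAt_logb_one_add_div (a := b) hY.ne' (by positivity))).congr_deriv ?_
  have hlog : log 2 ≠ 0 := by positivity
  have hXa : s + p * g + a ≠ 0 := by positivity
  have hYb : s + p * k + b ≠ 0 := by positivity
  field_simp
  ring

theorem secrecyRate_unimodal {a b s g k : ℝ} (hs : 0 < s) (ha : 0 ≤ a) (hb : 0 ≤ b)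
    (hg : 0 < g) (hk : 0 < k) (hlead : b * g < a * k)
    (hzero : 0 < s * (b * k - a * g) + a * b * (k - g)) :
    ∃ r, 0 < r ∧ StrictMonoOn (secrecyRate a b s g k) (Icc 0 r) ∧
      StrictAntiOn (secrecyRate a b s g k) (Ici r) := by
  obtain ⟨r, hr, hpos, hneg⟩ := exists_pos_root_sign_change (c₁ := 2 * s * g * k * (b - a))
    (mul_neg_of_pos_of_neg (mul_pos hg hk) (sub_neg.mpr hlead)) (mul_pos hs hzero)
  have hnum : ∀ p, b * k * (s + p * g) * (s + p * g + a) - a * g * (s + p * k) * (s + p * k + b)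
      = g * k * (b * g - a * k) * p ^ 2 + 2 * s * g * k * (b - a) * p
        + s * (s * (b * k - a * g) + a * b * (k - g)) := fun p => by ring
  have hden : ∀ p, 0 ≤ p →
      0 < (s + p * g) * (s + p * g + a) * (s + p * k) * (s + p * k + b) * log 2 := by
    intro p hp
    have : 0 < log 2 := log_pos one_lt_two
    positivity
  refine ⟨r, hr, strictMonoOn_Icc_strictAntiOn_Ici_of_hasDerivAt hr.le
    (fun p hp => hasDerivAt_secrecyRate hs ha hb hg.le hk.le hp) (fun p hp => ?_) (fun p hp => ?_)⟩
  · rw [hnum]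
    exact div_pos (hpos p hp) (hden p hp.1.le)
  · rw [hnum]
    exact div_neg_of_neg_of_pos (hneg p hp) (hden p (hr.le.trans (le_of_lt hp)))

theorem secure_rate_unique_max_general
    (hm he gm ge σ Ps : ℝ)
    (hhe : 0 < he) (hgm : 0 < gm)
    (hσ : 0 < σ) (hPs : 0 < Ps)
    (hmain : hm > he) (hg : ge > gm)
    (hz : 0 < σ ^ 2 * Ps * hm ^ 2 * he ^ 2 * (ge ^ 2 - gm ^ 2) +
        σ ^ 4 * (ge ^ 2 * he ^ 2 - gm ^ 2 * hm ^ 2)) :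
    ∃! Pjo : ℝ, 0 < Pjo ∧
      StrictMonoOn (fun p : ℝ =>
          Real.logb 2 (1 + Ps * hm ^ 2 / (σ ^ 2 + p * gm ^ 2)) -
            Real.logb 2 (1 + Ps * he ^ 2 / (σ ^ 2 + p * ge ^ 2)))
        (Set.Icc 0 Pjo) ∧
      StrictAntiOn (fun p : ℝ =>
          Real.logb 2 (1 + Ps * hm ^ 2 / (σ ^ 2 + p * gm ^ 2)) -
            Real.logb 2 (1 + Ps * he ^ 2 / (σ ^ 2 + p * ge ^ 2)))
        (Set.Ici Pjo) ∧
      ∀ p ∈ Set.Ici (0 : ℝ), p ≠ Pjo →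
        Real.logb 2 (1 + Ps * hm ^ 2 / (σ ^ 2 + p * gm ^ 2)) -
            Real.logb 2 (1 + Ps * he ^ 2 / (σ ^ 2 + p * ge ^ 2)) <
          Real.logb 2 (1 + Ps * hm ^ 2 / (σ ^ 2 + Pjo * gm ^ 2)) -
            Real.logb 2 (1 + Ps * he ^ 2 / (σ ^ 2 + Pjo * ge ^ 2)) := by
  have hlead : Ps * he ^ 2 * gm ^ 2 < Ps * hm ^ 2 * ge ^ 2 := by
    have hh : he ^ 2 < hm ^ 2 := by gcongr
    have hgg : gm ^ 2 < ge ^ 2 := by gcongr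
    gcongr
  have hzero : 0 < σ ^ 2 * (Ps * he ^ 2 * ge ^ 2 - Ps * hm ^ 2 * gm ^ 2)
      + Ps * hm ^ 2 * (Ps * he ^ 2) * (ge ^ 2 - gm ^ 2) := by
    refine pos_of_mul_pos_right (a := σ ^ 2) ?_ (by positivity)
    linear_combination mul_pos hPs hz
  obtain ⟨r, hr, hmono, hanti⟩ := secrecyRate_unimodal (by positivity) (by positivity)
    (by positivity) (by positivity) (pow_pos (hgm.trans hg) 2) hlead hzero
  have hmax : ∀ p ∈ Ici (0 : ℝ), p ≠ r → secrecyRate _ _ _ _ _ p < secrecyRate _ _ _ _ _ r :=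
    fun p hp hne => lt_of_strictMonoOn_Icc_of_strictAntiOn_Ici hmono hanti hr.le hp hne
  refine ⟨r, ⟨hr, hmono, hanti, hmax⟩, fun r' ⟨hr', _, _, hmax'⟩ => ?_⟩
  by_contra hne
  exact (hmax r' hr'.le hne).not_gt (hmax' r hr.le (Ne.symm hne))

theorem secure_rate_unique_max
    (hm he gm ge σ Ps : ℝ)
    (hhm : 0 < hm) (hhe : 0 < he) (hgm : 0 < gm) (hge : 0 < ge)
    (hσ : 0 < σ) (hPs : 0 < Ps)
    (hmain : hm > he) (hg : ge > gm)
    (hz : 0 < σ ^ 2 * Ps * hm ^ 2 * he ^ 2 * (ge ^ 2 - gm ^ 2) +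
        σ ^ 4 * (ge ^ 2 * he ^ 2 - gm ^ 2 * hm ^ 2)) :
    ∃! Pjo : ℝ, 0 < Pjo ∧
      StrictMonoOn (fun p : ℝ =>
          Real.logb 2 (1 + Ps * hm ^ 2 / (σ ^ 2 + p * gm ^ 2)) -
            Real.logb 2 (1 + Ps * he ^ 2 / (σ ^ 2 + p * ge ^ 2)))
        (Set.Icc 0 Pjo) ∧
      StrictAntiOn (fun p : ℝ =>
          Real.logb 2 (1 + Ps * hm ^ 2 / (σ ^ 2 + p * gm ^ 2)) -
            Real.logb 2 (1 + Ps * he ^ 2 / (σ ^ 2 + p * ge ^ 2)))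
        (Set.Ici Pjo) ∧
      ∀ p ∈ Set.Ici (0 : ℝ), p ≠ Pjo →
        Real.logb 2 (1 + Ps * hm ^ 2 / (σ ^ 2 + p * gm ^ 2)) -
            Real.logb 2 (1 + Ps * he ^ 2 / (σ ^ 2 + p * ge ^ 2)) <
          Real.logb 2 (1 + Ps * hm ^ 2 / (σ ^ 2 + Pjo * gm ^ 2)) -
            Real.logb 2 (1 + Ps * he ^ 2 / (σ ^ 2 + Pjo * ge ^ 2)) :=
  secure_rate_unique_max_general hm he gm ge σ Ps hhe hgm hσ hPs hmain hg hz
end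

section
/- Let h_m, h_e, g_m, g_e, σ, P_s, P_j be positive reals with h_e > h_m (user e has the better source channel). Then P_s·h_m²/(σ² + P_j·g_m²) > P_s·h_e²/(σ² + P_j·g_e²) holds for some P_j > 0 if and only if g_e²h_m² > g_m²h_e²; and in that case the inequality holds exactly when P_j > σ²(h_e² − h_m²)/(g_e²h_m² − g_m²h_e²). -/
theorem subcarrier_snatching_iff
    (hm he gm ge σ Ps : ℝ)
    (hhm : 0 < hm) (hhe : 0 < he) (hgm : 0 < gm) (hge : 0 < ge)
    (hσ : 0 < σ) (hPs : 0 < Ps) (hmain : he > hm) :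
    ((∃ Pj : ℝ, 0 < Pj ∧
        Ps * hm ^ 2 / (σ ^ 2 + Pj * gm ^ 2) > Ps * he ^ 2 / (σ ^ 2 + Pj * ge ^ 2)) ↔
      ge ^ 2 * hm ^ 2 > gm ^ 2 * he ^ 2) ∧
    (ge ^ 2 * hm ^ 2 > gm ^ 2 * he ^ 2 →
      ∀ Pj : ℝ, 0 < Pj →
        (Ps * hm ^ 2 / (σ ^ 2 + Pj * gm ^ 2) > Ps * he ^ 2 / (σ ^ 2 + Pj * ge ^ 2) ↔
          Pj > σ ^ 2 * (he ^ 2 - hm ^ 2) / (ge ^ 2 * hm ^ 2 - gm ^ 2 * he ^ 2))) := by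
  have key : ∀ Pj : ℝ, 0 < Pj →
      (Ps * hm ^ 2 / (σ ^ 2 + Pj * gm ^ 2) > Ps * he ^ 2 / (σ ^ 2 + Pj * ge ^ 2) ↔
        Pj * (ge ^ 2 * hm ^ 2 - gm ^ 2 * he ^ 2) > σ ^ 2 * (he ^ 2 - hm ^ 2)) := by
    intro Pj hPj
    have d1 : 0 < σ ^ 2 + Pj * gm ^ 2 := by positivity
    have d2 : 0 < σ ^ 2 + Pj * ge ^ 2 := by positivity
    rw [gt_iff_lt, div_lt_div_iff₀ d2 d1]
    constructor <;> intro h <;> nlinarith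
  have hrhs : 0 < σ ^ 2 * (he ^ 2 - hm ^ 2) := by
    have h1 : 0 < he ^ 2 - hm ^ 2 := by nlinarith
    have h2 : 0 < σ ^ 2 := by positivity
    exact mul_pos h2 h1
  constructor
  · constructor
    · rintro ⟨Pj, hPj, h⟩
      have := (key Pj hPj).mp h
      nlinarith
    · intro h
      have hD0 : 0 < ge ^ 2 * hm ^ 2 - gm ^ 2 * he ^ 2 := by linarith
      refine ⟨σ ^ 2 * (he ^ 2 - hm ^ 2) / (ge ^ 2 * hm ^ 2 - gm ^ 2 * he ^ 2) + 1,
        by positivity, ?_⟩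
      rw [key _ (by positivity)]
      rw [gt_iff_lt, ← div_lt_iff₀ hD0]
      linarith
  · intro h Pj hPj
    have hD0 : 0 < ge ^ 2 * hm ^ 2 - gm ^ 2 * he ^ 2 := by linarith
    rw [key Pj hPj, gt_iff_lt, gt_iff_lt, div_lt_iff₀ hD0]
end
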